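/- arXiv:1809.06156 — 3 statements merged into one kernel-verified Lean document; each statement's English description precedes it below -/
import Mathlib

section
/- Let S ∈ S^n be positive definite and ρ > 0. The matrix equation ρZ − Z^{-1} = ρY − S in the variable Z ≻ 0 has a unique positive definite solution, given by Z = Q diag(z_i) Qᵀ where ρY − S = Q diag(λ_i) Qᵀ is an eigendecomposition and z_i = (λ_i + √(λ_i² + 4ρ))/(2ρ). -/
/-!
The scalar map `x ↦ ρ x - x⁻¹` is a bijection from `(0, ∞)` onto `ℝ` whose inverse is
`posRoot ρ`. The continuous functional calculus transports this to matrices: `Z = posRoot ρ (A)`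
for `A = ρY - S` solves the equation, and any positive definite solution `W` has `A = ρW - W⁻¹`,
so `posRoot ρ (A) = (posRoot ρ ∘ (x ↦ ρ x - x⁻¹)) (W) = W` because the spectrum of `W` is positive.
-/

open Matrix

/-- The positive root of `ρ z² - a z - 1`. -/
noncomputable def posRoot (ρ a : ℝ) : ℝ := (a + √(a ^ 2 + 4 * ρ)) / (2 * ρ)

section posRoot

variable {ρ : ℝ}

theorem posRoot_pos (hρ : 0 < ρ) (a : ℝ) : 0 < posRoot ρ a := by
  have hlt : |a| < √(a ^ 2 + 4 * ρ) :=
    (Real.lt_sqrt (abs_nonneg a)).mpr (by rw [sq_abs]; linarith)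
  exact div_pos (by linarith [neg_abs_le a]) (by linarith)

theorem mul_posRoot_sub_inv (hρ : 0 < ρ) (a : ℝ) :
    ρ * posRoot ρ a - (posRoot ρ a)⁻¹ = a := by
  have hs : √(a ^ 2 + 4 * ρ) ^ 2 = a ^ 2 + 4 * ρ := Real.sq_sqrt (by positivity)
  have hprod : posRoot ρ a * (ρ * posRoot ρ a - a) = 1 := by
    unfold posRoot
    field_simp
    linear_combination hs
  rw [inv_eq_of_mul_eq_one_right hprod]
  ring

theorem posRoot_mul_sub_inv (hρ : 0 < ρ) {x : ℝ} (hx : 0 < x) :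
    posRoot ρ (ρ * x - x⁻¹) = x := by
  have hsq : (ρ * x - x⁻¹) ^ 2 + 4 * ρ = (ρ * x + x⁻¹) ^ 2 := by
    field_simp
    ring
  rw [posRoot, hsq, Real.sqrt_sq (by positivity)]
  field_simp
  ring

end posRoot

namespace Matrix

open scoped ComplexOrder MatrixOrder

variable {n 𝕜 : Type*} [Fintype n] [DecidableEq n] [RCLike 𝕜]

theorem continuousOn_spectrum (A : Matrix n n 𝕜) (f : ℝ → ℝ) :
    ContinuousOn f (spectrum ℝ A) :=
  A.finite_real_spectrum.continuousOn f

theorem IsHermitian.cfc_comp {A : Matrix n n 𝕜} (hA : A.IsHermitian) (g f : ℝ → ℝ) :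
    cfc (g ∘ f) A = cfc g (cfc f A) :=
  _root_.cfc_comp g f A hA ((A.finite_real_spectrum.image f).continuousOn g)
    (A.continuousOn_spectrum f)

theorem IsHermitian.posDef_cfc {A : Matrix n n 𝕜} (hA : A.IsHermitian) {f : ℝ → ℝ}
    (hf : ∀ x ∈ spectrum ℝ A, 0 < f x) : (cfc f A).PosDef :=
  ((cfc_isStrictlyPositive_iff f A (A.continuousOn_spectrum f) hA).mpr hf).posDef

theorem IsHermitian.cfc_eq_mul_diagonal_mul {A : Matrix n n ℝ} (hA : A.IsHermitian)
    (f : ℝ → ℝ) :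
    cfc f A = (hA.eigenvectorUnitary : Matrix n n ℝ) * diagonal (fun i ↦ f (hA.eigenvalues i)) *
      (star hA.eigenvectorUnitary : Matrix n n ℝ) := by
  rw [hA.cfc_eq]
  rfl

theorem PosDef.cfc_mul_sub_inv {W : Matrix n n 𝕜} (hW : W.PosDef) (ρ : ℝ) :
    cfc (fun x : ℝ ↦ ρ * x - x⁻¹) W = ρ • W - W⁻¹ := by
  rw [cfc_sub (ρ * ·) (·⁻¹) W (W.continuousOn_spectrum _) (W.continuousOn_spectrum _),
    cfc_const_mul_id ρ W hW.isHermitian.isSelfAdjoint,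
    cfc_ringInverse_id (R := ℝ) _ hW.isUnit hW.isHermitian.isSelfAdjoint,
    nonsing_inv_eq_ringInverse]

variable {ρ : ℝ} (hρ : 0 < ρ)
include hρ

theorem IsHermitian.posDef_cfc_posRoot {A : Matrix n n 𝕜} (hA : A.IsHermitian) :
    (cfc (posRoot ρ) A).PosDef :=
  hA.posDef_cfc fun a _ ↦ posRoot_pos hρ a

theorem IsHermitian.smul_cfc_posRoot_sub_inv {A : Matrix n n 𝕜} (hA : A.IsHermitian) :
    ρ • cfc (posRoot ρ) A - (cfc (posRoot ρ) A)⁻¹ = A := by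
  rw [← (hA.posDef_cfc_posRoot hρ).cfc_mul_sub_inv, ← hA.cfc_comp]
  conv_rhs => rw [← cfc_id' ℝ A hA]
  exact cfc_congr fun a _ ↦ mul_posRoot_sub_inv hρ a

theorem PosDef.eq_cfc_posRoot_of_smul_sub_inv_eq {W A : Matrix n n 𝕜} (hW : W.PosDef)
    (h : ρ • W - W⁻¹ = A) : W = cfc (posRoot ρ) A := by
  rw [← h, ← hW.cfc_mul_sub_inv, ← hW.isHermitian.cfc_comp]
  conv_lhs => rw [← cfc_id' ℝ W hW.isHermitian]
  exact cfc_congr fun x hx ↦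
    (posRoot_mul_sub_inv hρ (hW.isStrictlyPositive.spectrum_pos hx)).symm

end Matrix

theorem prox_logdet_unique_posdef_solution_general (n : ℕ) (ρ : ℝ) (hρ : 0 < ρ)
    (S Y : Matrix (Fin n) (Fin n) ℝ)
    (hA : (ρ • Y - S).IsHermitian) :
    letI Z : Matrix (Fin n) (Fin n) ℝ :=
      (hA.eigenvectorUnitary : Matrix (Fin n) (Fin n) ℝ) *
        Matrix.diagonal (fun i =>
          (hA.eigenvalues i + Real.sqrt ((hA.eigenvalues i) ^ 2 + 4 * ρ)) / (2 * ρ)) *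
        (star hA.eigenvectorUnitary : Matrix (Fin n) (Fin n) ℝ)
    (Z.PosDef ∧ ρ • Z - Z⁻¹ = ρ • Y - S) ∧
      ∀ W : Matrix (Fin n) (Fin n) ℝ, W.PosDef → ρ • W - W⁻¹ = ρ • Y - S → W = Z := by
  simp only [← posRoot.eq_def]
  rw [← hA.cfc_eq_mul_diagonal_mul]
  exact ⟨⟨hA.posDef_cfc_posRoot hρ, hA.smul_cfc_posRoot_sub_inv hρ⟩,
    fun W hW h ↦ hW.eq_cfc_posRoot_of_smul_sub_inv_eq hρ h⟩

/-- The matrix equation `ρZ − Z⁻¹ = ρY − S` (in `Z ≻ 0`) has a unique positive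
definite solution, given explicitly through an eigendecomposition of `ρY − S`. -/
theorem prox_logdet_unique_posdef_solution (n : ℕ) (ρ : ℝ) (hρ : 0 < ρ)
    (S Y : Matrix (Fin n) (Fin n) ℝ) (hS : S.PosDef) (hY : Y.IsHermitian)
    (hA : (ρ • Y - S).IsHermitian) :
    letI Z : Matrix (Fin n) (Fin n) ℝ :=
      (hA.eigenvectorUnitary : Matrix (Fin n) (Fin n) ℝ) *
        Matrix.diagonal (fun i =>
          (hA.eigenvalues i + Real.sqrt ((hA.eigenvalues i) ^ 2 + 4 * ρ)) / (2 * ρ)) *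
        (star hA.eigenvectorUnitary : Matrix (Fin n) (Fin n) ℝ)
    (Z.PosDef ∧ ρ • Z - Z⁻¹ = ρ • Y - S) ∧
      ∀ W : Matrix (Fin n) (Fin n) ℝ, W.PosDef → ρ • W - W⁻¹ = ρ • Y - S → W = Z :=
  prox_logdet_unique_posdef_solution_general n ρ hρ S Y hA
end

section
/- Suppose α ≤ α_c := n/tr(S^{-1}) where S ≻ 0. Then for β > 0 there exists γ < 0 such that the matrix U = [[(γ²/β)I, γI, 0],[γI, βI, 0],[0, 0, βI]] ∈ S^{3n} is positive semidefinite and satisfies tr(GU) > 0, where G = [[−S^{-1}, −I, 0],[−I, 0, 0],[0, 0, −αI]]. Explicitly, any γ in the open interval (−α_c β(1+√(1−α/α_c)), −α_c β(1−√(1−α/α_c))) works. -/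
/-! With `t = tr(S⁻¹)` and `α_c = n / t`, the hypothesis `0 < α ≤ α_c` forces `t > 0`.
The matrix `U` is block diagonal with blocks `β I` and the Gram matrix `Cᵀ C` of
`C = [(γ/√β) I, √β I]`, so it is positive semidefinite for every `γ`. A block computation gives
`tr(GU) = -(t/β) (γ² + 2 α_c β γ + α α_c β²)`, using `n = α_c t`. Since `α ≤ α_c` this quadratic
has the real roots `-α_c β (1 ± √(1 - α/α_c))` and is negative strictly between them; it is
positive for `γ ≥ 0`, so such `γ` are negative. -/

open Matrix

theorem Matrix.PosSemidef.fromBlocks_zero {m n R : Type*} [Fintype m] [Fintype n] [CommRing R]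
    [PartialOrder R] [StarRing R] [StarOrderedRing R]
    {A : Matrix m m R} {D : Matrix n n R} (hA : A.PosSemidef) (hD : D.PosSemidef) :
    (fromBlocks A 0 0 D).PosSemidef := by
  rw [posSemidef_iff_dotProduct_mulVec] at hA hD ⊢
  refine ⟨hA.1.fromBlocks (by simp) hD.1, fun x => ?_⟩
  rw [← Sum.elim_comp_inl_inr x, fromBlocks_mulVec]
  simpa [dotProduct, Fintype.sum_sum_type] using
    add_nonneg (hA.2 (x ∘ Sum.inl)) (hD.2 (x ∘ Sum.inr))

theorem Matrix.posSemidef_fromBlocks_mul_smul_one {m : Type*} [Fintype m] [DecidableEq m]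
    (x y : ℝ) :
    (fromBlocks ((x * x) • 1) ((x * y) • 1) ((x * y) • 1) ((y * y) • 1) :
      Matrix (m ⊕ m) (m ⊕ m) ℝ).PosSemidef := by
  set C : Matrix m (m ⊕ m) ℝ := fromCols (x • 1) (y • 1)
  have hgram : fromBlocks ((x * x) • 1) ((x * y) • 1) ((x * y) • 1) ((y * y) • 1) = Cᴴ * C := by
    rw [conjTranspose_fromCols_eq_fromRows_conjTranspose, fromRows_mul_fromCols]
    simp [smul_smul, mul_comm y x]
  rw [hgram]
  exact posSemidef_conjTranspose_mul_self C

theorem Matrix.trace_fromBlocks {l m R : Type*} [Fintype l] [Fintype m] [AddCommMonoid R]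
    (A : Matrix l l R) (B : Matrix l m R) (C : Matrix m l R) (D : Matrix m m R) :
    (fromBlocks A B C D).trace = A.trace + D.trace := by
  simp [trace, Fintype.sum_sum_type]

section Certificate

variable {m : Type*} [Fintype m] [DecidableEq m]

variable (m) in
noncomputable def farkasU (β γ : ℝ) : Matrix ((m ⊕ m) ⊕ m) ((m ⊕ m) ⊕ m) ℝ :=
  fromBlocks (fromBlocks ((γ ^ 2 / β) • 1) (γ • 1) (γ • 1) (β • 1)) 0 0 (β • 1)

def farkasG (P : Matrix m m ℝ) (α : ℝ) : Matrix ((m ⊕ m) ⊕ m) ((m ⊕ m) ⊕ m) ℝ :=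
  fromBlocks (fromBlocks (-P) (-1) (-1) 0) 0 0 (-(α • 1))

theorem posSemidef_farkasU {β : ℝ} (hβ : 0 < β) (γ : ℝ) : (farkasU m β γ).PosSemidef := by
  have hsqrt : √β * √β = β := Real.mul_self_sqrt hβ.le
  have hinner := posSemidef_fromBlocks_mul_smul_one (m := m) (γ / √β) √β
  rw [div_mul_div_comm, hsqrt, div_mul_cancel₀ _ (Real.sqrt_pos.2 hβ).ne', ← sq] at hinner
  exact hinner.fromBlocks_zero (PosSemidef.one.smul hβ.le)

theorem trace_farkasG_mul_farkasU (P : Matrix m m ℝ) (α β γ : ℝ) :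
    (farkasG P α * farkasU m β γ).trace =
      -(γ ^ 2 / β) * P.trace - 2 * γ * Fintype.card m - α * β * Fintype.card m := by
  simp only [farkasG, farkasU, fromBlocks_multiply, Algebra.mul_smul_comm, mul_one, smul_neg,
    smul_zero, add_zero, Matrix.mul_zero, Matrix.mul_smul, Matrix.mul_one, Matrix.zero_mul, smul_smul,
    zero_add, trace_fromBlocks, trace_add, trace_neg, trace_smul, smul_eq_mul, trace_one, neg_mul]
  ring

end Certificate

theorem quadratic_neg_of_mem_Ioo {a α β γ : ℝ} (ha : 0 < a) (hαa : α ≤ a)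
    (hlow : -a * β * (1 + √(1 - α / a)) < γ) (hupp : γ < -a * β * (1 - √(1 - α / a))) :
    γ ^ 2 + 2 * a * β * γ + α * a * β ^ 2 < 0 := by
  set s := √(1 - α / a)
  have hs : s ^ 2 = 1 - α / a := Real.sq_sqrt (by rw [sub_nonneg, div_le_one ha]; exact hαa)
  have hsq : (γ + a * β) ^ 2 < (a * β * s) ^ 2 := sq_lt_sq' (by linarith) (by linarith)
  calc γ ^ 2 + 2 * a * β * γ + α * a * β ^ 2 = (γ + a * β) ^ 2 - (a * β * s) ^ 2 := by
        rw [mul_pow, hs]; field_simp; ring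
    _ < 0 := sub_neg.2 hsq

theorem farkas_certificate_general (n : ℕ)
    (S : Matrix (Fin n) (Fin n) ℝ)
    (α β : ℝ) (hα : 0 < α) (hβ : 0 < β)
    (hαc : α ≤ (n : ℝ) / (S⁻¹).trace) :
    ∀ γ : ℝ,
      -((n : ℝ) / (S⁻¹).trace) * β * (1 + Real.sqrt (1 - α / ((n : ℝ) / (S⁻¹).trace))) < γ →
      γ < -((n : ℝ) / (S⁻¹).trace) * β * (1 - Real.sqrt (1 - α / ((n : ℝ) / (S⁻¹).trace))) →
      γ < 0 ∧
      (Matrix.fromBlocks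
        (Matrix.fromBlocks ((γ ^ 2 / β) • (1 : Matrix (Fin n) (Fin n) ℝ)) (γ • 1) (γ • 1) (β • 1))
        (0 : Matrix (Fin n ⊕ Fin n) (Fin n) ℝ) (0 : Matrix (Fin n) (Fin n ⊕ Fin n) ℝ) (β • (1 : Matrix (Fin n) (Fin n) ℝ))).PosSemidef ∧
      0 < ((Matrix.fromBlocks
            (Matrix.fromBlocks (-(S⁻¹)) (-(1 : Matrix (Fin n) (Fin n) ℝ)) (-1) 0)
            (0 : Matrix (Fin n ⊕ Fin n) (Fin n) ℝ) (0 : Matrix (Fin n) (Fin n ⊕ Fin n) ℝ) (-(α • (1 : Matrix (Fin n) (Fin n) ℝ)))) *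
          (Matrix.fromBlocks
            (Matrix.fromBlocks ((γ ^ 2 / β) • (1 : Matrix (Fin n) (Fin n) ℝ)) (γ • 1) (γ • 1) (β • 1))
            (0 : Matrix (Fin n ⊕ Fin n) (Fin n) ℝ) (0 : Matrix (Fin n) (Fin n ⊕ Fin n) ℝ) (β • (1 : Matrix (Fin n) (Fin n) ℝ)))).trace := by
  intro γ hlow hupp
  set t := (S⁻¹).trace
  set a := (n : ℝ) / t
  have ha : 0 < a := hα.trans_le hαc
  have ht : 0 < t :=
    (div_pos_iff.mp ha).elim (·.2) fun h => absurd h.1 (Nat.cast_nonneg n).not_gt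
  have hq := quadratic_neg_of_mem_Ioo ha hαc hlow hupp
  have hγ : γ < 0 := by nlinarith [mul_pos ha hβ, mul_pos (mul_pos hα ha) (pow_pos hβ 2)]
  refine ⟨hγ, posSemidef_farkasU hβ γ, ?_⟩
  change 0 < (farkasG S⁻¹ α * farkasU (Fin n) β γ).trace
  have hn : (n : ℝ) = a * t := (div_mul_cancel₀ _ ht.ne').symm
  have hfactor : -(γ ^ 2 / β) * t - 2 * γ * n - α * β * n =
      t / β * -(γ ^ 2 + 2 * a * β * γ + α * a * β ^ 2) := by
    rw [hn]; field_simp; ring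
  rw [trace_farkasG_mul_farkasU, Fintype.card_fin, hfactor]
  exact mul_pos (div_pos ht hβ) (neg_pos.2 hq)

/-- Farkas-type certificate: if `α ≤ α_c = n/tr(S⁻¹)` then for every `β > 0`,
any `γ` in the open interval
`(−α_c β(1+√(1−α/α_c)), −α_c β(1−√(1−α/α_c)))` is negative and makes the
block matrix `U = [[(γ²/β)I, γI, 0],[γI, βI, 0],[0,0,βI]]` positive semidefinite
with `tr(GU) > 0`, where `G = [[−S⁻¹, −I, 0],[−I, 0, 0],[0,0,−αI]]`. -/
theorem farkas_certificate (n : ℕ) (hn : 0 < n)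
    (S : Matrix (Fin n) (Fin n) ℝ) (hS : S.PosDef)
    (α β : ℝ) (hα : 0 < α) (hβ : 0 < β)
    (hαc : α ≤ (n : ℝ) / (S⁻¹).trace) :
    ∀ γ : ℝ,
      -((n : ℝ) / (S⁻¹).trace) * β * (1 + Real.sqrt (1 - α / ((n : ℝ) / (S⁻¹).trace))) < γ →
      γ < -((n : ℝ) / (S⁻¹).trace) * β * (1 - Real.sqrt (1 - α / ((n : ℝ) / (S⁻¹).trace))) →
      γ < 0 ∧
      (Matrix.fromBlocks
        (Matrix.fromBlocks ((γ ^ 2 / β) • (1 : Matrix (Fin n) (Fin n) ℝ)) (γ • 1) (γ • 1) (β • 1))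
        (0 : Matrix (Fin n ⊕ Fin n) (Fin n) ℝ) (0 : Matrix (Fin n) (Fin n ⊕ Fin n) ℝ) (β • (1 : Matrix (Fin n) (Fin n) ℝ))).PosSemidef ∧
      0 < ((Matrix.fromBlocks
            (Matrix.fromBlocks (-(S⁻¹)) (-(1 : Matrix (Fin n) (Fin n) ℝ)) (-1) 0)
            (0 : Matrix (Fin n ⊕ Fin n) (Fin n) ℝ) (0 : Matrix (Fin n) (Fin n ⊕ Fin n) ℝ) (-(α • (1 : Matrix (Fin n) (Fin n) ℝ)))) *
          (Matrix.fromBlocks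
            (Matrix.fromBlocks ((γ ^ 2 / β) • (1 : Matrix (Fin n) (Fin n) ℝ)) (γ • 1) (γ • 1) (β • 1))
            (0 : Matrix (Fin n ⊕ Fin n) (Fin n) ℝ) (0 : Matrix (Fin n) (Fin n ⊕ Fin n) ℝ) (β • (1 : Matrix (Fin n) (Fin n) ℝ)))).trace :=
  farkas_certificate_general n S α β hα hβ hαc
end

section
/- (Proposition 2) Let (X, Z) be primal-dual optimal for the sparse SEM with parameters (S, α), i.e., they satisfy the KKT conditions: X₁ = (S−Z₁)^{-1}, X ⪰ 0, 0 ⪯ X₄ ⪯ αI, P(X₂)=I, Z ⪰ 0, ‖P^c(Z₂)‖_∞ ≤ γ, ZX = 0, Z₄(X₄−αI) = 0. Then for any β > 0, X̃ = [[X₁/β, X₂ᵀ],[X₂, βX₄]] and Z̃ = [[βZ₁, Z₂ᵀ],[Z₂, Z₄/β]] satisfy the KKT conditions for parameters (βS, βα) with the same γ. -/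
/-!
The rescaled pair is a congruence of the original one:
`X̃ = β⁻¹ F X F` and `Z̃ = β G Z G` with `F = diag(I, β I)`, `G = diag(I, β⁻¹ I)`.
Congruence and positive scaling preserve positive semidefiniteness, and `G F = I` gives
`Z̃ X̃ = G (Z X) F = 0`; the remaining conditions are invariant under scaling by `β`.
-/

open Matrix

namespace Matrix

variable {m n K : Type*} [Fintype m] [Fintype n] [DecidableEq m] [DecidableEq n] [Field K]

theorem inv_smul₀ {c : K} (hc : c ≠ 0) (A : Matrix n n K) : (c • A)⁻¹ = c⁻¹ • A⁻¹ := by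
  by_cases hA : IsUnit A.det
  · exact inv_smul' A (Units.mk0 c hc) hA
  · have hcA : ¬ IsUnit (c • A).det := by
      simpa [det_smul, hc] using hA
    rw [nonsing_inv_apply_not_isUnit _ hA, nonsing_inv_apply_not_isUnit _ hcA, smul_zero]

theorem fromBlocks_smul_smul_inv_eq (c : K) (hc : c ≠ 0) (A : Matrix m m K) (B : Matrix m n K)
    (C : Matrix n m K) (D : Matrix n n K) :
    fromBlocks (c • A) B C (c⁻¹ • D) =
      c • (fromBlocks 1 0 0 (c⁻¹ • 1) * fromBlocks A B C D * fromBlocks 1 0 0 (c⁻¹ • 1)) := by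
  simp [fromBlocks_multiply, fromBlocks_smul, smul_smul, hc]

theorem fromBlocks_smul_smul_inv_mul_eq_zero {c : K} (hc : c ≠ 0) {A A' : Matrix m m K}
    {B B' : Matrix m n K} {C C' : Matrix n m K} {D D' : Matrix n n K}
    (h : fromBlocks A B C D * fromBlocks A' B' C' D' = 0) :
    fromBlocks (c • A) B C (c⁻¹ • D) * fromBlocks (c⁻¹ • A') B' C' (c • D') = 0 := by
  rw [fromBlocks_multiply, ← fromBlocks_zero, fromBlocks_inj] at h ⊢
  obtain ⟨h₁, h₂, h₃, h₄⟩ := h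
  simp [smul_smul, hc, ← smul_add, h₁, h₂, h₃, h₄]

theorem PosSemidef.fromBlocks_smul_smul_inv [PartialOrder K] [StarRing K] [TrivialStar K]
    [IsOrderedRing K] [StarOrderedRing K]
    {A : Matrix m m K} {B : Matrix m n K} {C : Matrix n m K} {D : Matrix n n K}
    (h : (fromBlocks A B C D).PosSemidef) {c : K} (hc : 0 < c) :
    (fromBlocks (c • A) B C (c⁻¹ • D)).PosSemidef := by
  rw [fromBlocks_smul_smul_inv_eq c hc.ne']
  refine PosSemidef.smul ?_ hc.le
  simpa [fromBlocks_transpose] using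
    h.mul_mul_conjTranspose_same (fromBlocks 1 0 0 (c⁻¹ • 1) : Matrix (m ⊕ n) (m ⊕ n) K)

end Matrix

theorem scaled_sem_kkt_general (n : ℕ)
    (S : Matrix (Fin n) (Fin n) ℝ)
    (α γ β : ℝ) (hβ : 0 < β)
    (IA : Set (Fin n × Fin n))
    (X₁ X₂ X₄ Z₁ Z₂ Z₄ : Matrix (Fin n) (Fin n) ℝ)
    -- stationarity
    (hstat : X₁ = (S - Z₁)⁻¹)
    -- primal feasibility
    (hXpsd : (Matrix.fromBlocks X₁ X₂ᵀ X₂ X₄).PosSemidef)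
    (hX₄l : X₄.PosSemidef)
    (hX₄u : (α • (1 : Matrix (Fin n) (Fin n) ℝ) - X₄).PosSemidef)
    (hPX₂ : ∀ p ∈ IA, X₂ p.1 p.2 = (1 : Matrix (Fin n) (Fin n) ℝ) p.1 p.2)
    -- dual feasibility
    (hZpsd : (Matrix.fromBlocks Z₁ Z₂ᵀ Z₂ Z₄).PosSemidef)
    (hPcZ₂ : ∀ p : Fin n × Fin n, p ∉ IA → |Z₂ p.1 p.2| ≤ γ)
    -- complementary slackness
    (hZX : (Matrix.fromBlocks Z₁ Z₂ᵀ Z₂ Z₄) * (Matrix.fromBlocks X₁ X₂ᵀ X₂ X₄) = 0)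
    (hZ₄X₄ : Z₄ * (X₄ - α • (1 : Matrix (Fin n) (Fin n) ℝ)) = 0) :
    -- stationarity for (βS, βα)
    (β⁻¹ • X₁ = (β • S - β • Z₁)⁻¹) ∧
    -- primal feasibility for (βS, βα)
    (Matrix.fromBlocks (β⁻¹ • X₁) X₂ᵀ X₂ (β • X₄)).PosSemidef ∧
    (β • X₄).PosSemidef ∧
    ((β * α) • (1 : Matrix (Fin n) (Fin n) ℝ) - β • X₄).PosSemidef ∧
    (∀ p ∈ IA, X₂ p.1 p.2 = (1 : Matrix (Fin n) (Fin n) ℝ) p.1 p.2) ∧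
    -- dual feasibility for (βS, βα)
    (Matrix.fromBlocks (β • Z₁) Z₂ᵀ Z₂ (β⁻¹ • Z₄)).PosSemidef ∧
    (∀ p : Fin n × Fin n, p ∉ IA → |Z₂ p.1 p.2| ≤ γ) ∧
    -- complementary slackness for (βS, βα)
    ((Matrix.fromBlocks (β • Z₁) Z₂ᵀ Z₂ (β⁻¹ • Z₄)) *
        (Matrix.fromBlocks (β⁻¹ • X₁) X₂ᵀ X₂ (β • X₄)) = 0) ∧
    ((β⁻¹ • Z₄) * (β • X₄ - (β * α) • (1 : Matrix (Fin n) (Fin n) ℝ)) = 0) := by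
  refine ⟨?_, ?_, hX₄l.smul hβ.le, ?_, hPX₂, ?_, hPcZ₂,
    fromBlocks_smul_smul_inv_mul_eq_zero hβ.ne' hZX, ?_⟩
  · rw [hstat, ← smul_sub, inv_smul₀ hβ.ne']
  · simpa using hXpsd.fromBlocks_smul_smul_inv (inv_pos.2 hβ)
  · rw [mul_smul, ← smul_sub]
    exact hX₄u.smul hβ.le
  · exact hZpsd.fromBlocks_smul_smul_inv hβ
  · rw [mul_smul, ← smul_sub, smul_mul_smul_comm, inv_mul_cancel₀ hβ.ne', hZ₄X₄, smul_zero]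

/-- Proposition 2: if `(X, Z)` satisfies the KKT conditions of the sparse SEM
with parameters `(S, α)`, then `X̃ = [[X₁/β, X₂ᵀ],[X₂, βX₄]]` and
`Z̃ = [[βZ₁, Z₂ᵀ],[Z₂, Z₄/β]]` satisfy the KKT conditions for `(βS, βα)`. -/
theorem scaled_sem_kkt (n : ℕ)
    (S : Matrix (Fin n) (Fin n) ℝ) (hS : S.PosDef)
    (α γ β : ℝ) (hα : 0 < α) (hγ : 0 < γ) (hβ : 0 < β)
    (IA : Set (Fin n × Fin n))
    (X₁ X₂ X₄ Z₁ Z₂ Z₄ : Matrix (Fin n) (Fin n) ℝ)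
    -- stationarity
    (hstat : X₁ = (S - Z₁)⁻¹)
    -- primal feasibility
    (hXpsd : (Matrix.fromBlocks X₁ X₂ᵀ X₂ X₄).PosSemidef)
    (hX₄l : X₄.PosSemidef)
    (hX₄u : (α • (1 : Matrix (Fin n) (Fin n) ℝ) - X₄).PosSemidef)
    (hPX₂ : ∀ p ∈ IA, X₂ p.1 p.2 = (1 : Matrix (Fin n) (Fin n) ℝ) p.1 p.2)
    -- dual feasibility
    (hZpsd : (Matrix.fromBlocks Z₁ Z₂ᵀ Z₂ Z₄).PosSemidef)
    (hPcZ₂ : ∀ p : Fin n × Fin n, p ∉ IA → |Z₂ p.1 p.2| ≤ γ)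
    -- complementary slackness
    (hZX : (Matrix.fromBlocks Z₁ Z₂ᵀ Z₂ Z₄) * (Matrix.fromBlocks X₁ X₂ᵀ X₂ X₄) = 0)
    (hZ₄X₄ : Z₄ * (X₄ - α • (1 : Matrix (Fin n) (Fin n) ℝ)) = 0) :
    -- stationarity for (βS, βα)
    (β⁻¹ • X₁ = (β • S - β • Z₁)⁻¹) ∧
    -- primal feasibility for (βS, βα)
    (Matrix.fromBlocks (β⁻¹ • X₁) X₂ᵀ X₂ (β • X₄)).PosSemidef ∧
    (β • X₄).PosSemidef ∧
    ((β * α) • (1 : Matrix (Fin n) (Fin n) ℝ) - β • X₄).PosSemidef ∧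
    (∀ p ∈ IA, X₂ p.1 p.2 = (1 : Matrix (Fin n) (Fin n) ℝ) p.1 p.2) ∧
    -- dual feasibility for (βS, βα)
    (Matrix.fromBlocks (β • Z₁) Z₂ᵀ Z₂ (β⁻¹ • Z₄)).PosSemidef ∧
    (∀ p : Fin n × Fin n, p ∉ IA → |Z₂ p.1 p.2| ≤ γ) ∧
    -- complementary slackness for (βS, βα)
    ((Matrix.fromBlocks (β • Z₁) Z₂ᵀ Z₂ (β⁻¹ • Z₄)) *
        (Matrix.fromBlocks (β⁻¹ • X₁) X₂ᵀ X₂ (β • X₄)) = 0) ∧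
    ((β⁻¹ • Z₄) * (β • X₄ - (β * α) • (1 : Matrix (Fin n) (Fin n) ℝ)) = 0) :=
  scaled_sem_kkt_general n S α γ β hβ IA X₁ X₂ X₄ Z₁ Z₂ Z₄ hstat hXpsd hX₄l hX₄u hPX₂ hZpsd hPcZ₂
    hZX hZ₄X₄
end
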